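/- arXiv:1807.02833 — 5 statements merged into one kernel-verified Lean document; each statement's English description precedes it below -/
import Mathlib

section
/- For complex numbers α, β with Re(α) < 1/2 and Re(β) < 1/2, the double integral ∫_{ℝ²} exp(-x²/2 - y²/2) · ((x-y)/(x+y)) · (exp(αx² + βy²) - exp(αy² + βx²)) dx dy equals 4π(α - β) / ((1 - α - β)·√(1 - 2α)·√(1 - 2β)). -/
/-!
Substituting `x = u + v`, `y = u - v` (Jacobian `2`) turns the integrand into
`exp (-a (u² + v²)) · (v / u) · (exp (c u v) - exp (-c u v))` with `a = 1 - α - β` and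
`c = 2 (α - β)`; the hypotheses `Re α, Re β < 1/2` say exactly that `|Re c| < 2 Re a`, which makes
this absolutely integrable. For fixed `u` the `v`-integral is a first Gaussian moment,
`∫ v exp (-a v² ± c u v) dv = ± (c u / 2a) √(π / a) exp (c² u² / 4a)`, whose `u` cancels the `1 / u`
and leaves the Gaussian `exp (-(a - c² / 4a) u²)`. Since `a (a - c² / 4a) = (1 - 2α) (1 - 2β)`,
its integral `√(π / (a - c² / 4a))` combines with `√(π / a)` into `π / (√(1 - 2α) √(1 - 2β))`.
-/

open MeasureTheory Complex

theorem re_inv_pos {z : ℂ} (hz : 0 < z.re) : 0 < z⁻¹.re := by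
  rw [inv_re]
  exact div_pos hz (normSq_pos.2 fun h => by simp [h] at hz)

theorem mul_cpow_of_re_pos {z w : ℂ} (hz : 0 < z.re) (hw : 0 < w.re) (s : ℂ) :
    (z * w) ^ s = z ^ s * w ^ s := by
  have hz0 : z ≠ 0 := by rintro rfl; simp at hz
  have hw0 : w ≠ 0 := by rintro rfl; simp at hw
  have hargz := abs_lt.1 (abs_arg_lt_pi_div_two_iff.2 (Or.inl hz))
  have hargw := abs_lt.1 (abs_arg_lt_pi_div_two_iff.2 (Or.inl hw))
  have hmem : z.arg + w.arg ∈ Set.Ioc (-Real.pi) Real.pi :=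
    ⟨by linarith [Real.pi_pos], by linarith [Real.pi_pos]⟩
  rw [cpow_def_of_ne_zero (mul_ne_zero hz0 hw0), cpow_def_of_ne_zero hz0, cpow_def_of_ne_zero hw0,
    log_mul hz0 hw0 hmem, add_mul, Complex.exp_add]

theorem inv_cpow_of_re_pos {z : ℂ} (hz : 0 < z.re) (s : ℂ) : z⁻¹ ^ s = (z ^ s)⁻¹ :=
  inv_cpow z s fun h => by linarith [(arg_eq_pi_iff.1 h).1]

theorem cpow_half_div_mul_cpow_half_div {r a d p q : ℂ} (hr : 0 < r.re) (ha : 0 < a.re)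
    (hd : 0 < d.re) (hp : 0 < p.re) (hq : 0 < q.re) (h : a * d = p * q) :
    (r / a) ^ (1 / 2 : ℂ) * (r / d) ^ (1 / 2 : ℂ) = r / (p ^ (1 / 2 : ℂ) * q ^ (1 / 2 : ℂ)) := by
  have hsq : r ^ (1 / 2 : ℂ) * r ^ (1 / 2 : ℂ) = r := by
    rw [← cpow_add _ _ (by rintro rfl; simp at hr)]; norm_num
  rw [div_eq_mul_inv r a, div_eq_mul_inv r d, mul_cpow_of_re_pos hr (re_inv_pos ha),
    mul_cpow_of_re_pos hr (re_inv_pos hd), inv_cpow_of_re_pos ha, inv_cpow_of_re_pos hd,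
    ← mul_cpow_of_re_pos hp hq, ← h, mul_cpow_of_re_pos ha hd]
  conv_rhs => rw [← hsq]
  ring

theorem norm_cexp_sub_cexp_neg_le (w : ℂ) :
    ‖cexp w - cexp (-w)‖ ≤ 2 * ‖w‖ * Real.exp |w.re| := by
  let s : Set ℂ := re ⁻¹' Set.Icc (-|w.re|) |w.re|
  have hs : Convex ℝ s := (convex_Icc _ _).linear_preimage reLm
  have hbound : ∀ z ∈ s, ‖deriv cexp z‖ ≤ Real.exp |w.re| := fun z hz => by
    rw [Complex.deriv_exp, norm_exp]
    exact Real.exp_le_exp.2 hz.2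
  have hw : w ∈ s := ⟨neg_abs_le _, le_abs_self _⟩
  have hnw : -w ∈ s := ⟨neg_le_neg (le_abs_self _), neg_le_abs _⟩
  calc ‖cexp w - cexp (-w)‖ ≤ Real.exp |w.re| * ‖w - -w‖ :=
        hs.norm_image_sub_le_of_norm_deriv_le (fun z _ => differentiableAt_exp) hbound hnw hw
    _ = 2 * ‖w‖ * Real.exp |w.re| := by
        rw [sub_neg_eq_add, ← two_mul, norm_mul, Complex.norm_two]; ring

theorem integrable_ofReal_mul_cexp_quadratic {b : ℂ} (hb : b.re < 0) (c : ℂ) :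
    Integrable fun x : ℝ => (x : ℂ) * cexp (b * x ^ 2 + c * x) := by
  have hshift (d : ℂ) : Integrable fun x : ℝ => cexp (b * x ^ 2 + c * x) * cexp (d * x) := by
    simpa [← Complex.exp_add, add_mul, add_assoc] using integrable_cexp_quadratic' hb (c + d) 0
  refine ((hshift 1).norm.add (hshift (-1)).norm).mono' (by fun_prop) (ae_of_all _ fun x => ?_)
  calc ‖(x : ℂ) * cexp (b * x ^ 2 + c * x)‖
      = |x| * ‖cexp (b * x ^ 2 + c * x)‖ := by rw [norm_mul, norm_real, Real.norm_eq_abs]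
    _ ≤ (Real.exp x + Real.exp (-x)) * ‖cexp (b * x ^ 2 + c * x)‖ := by
        gcongr; linarith [Real.add_one_le_exp |x|, Real.exp_abs_le x]
    _ = ‖cexp (b * x ^ 2 + c * x) * cexp (1 * x)‖ +
          ‖cexp (b * x ^ 2 + c * x) * cexp (-1 * x)‖ := by
        simp only [norm_mul, norm_exp, one_mul, neg_one_mul, neg_re, ofReal_re]; ring

theorem integral_ofReal_mul_cexp_quadratic {b : ℂ} (hb : b.re < 0) (c : ℂ) :
    ∫ x : ℝ, (x : ℂ) * cexp (b * x ^ 2 + c * x) =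
      -c / (2 * b) * ((Real.pi / -b) ^ (1 / 2 : ℂ) * cexp (-c ^ 2 / (4 * b))) := by
  have hb0 : b ≠ 0 := by rintro rfl; simp at hb
  have hg : Integrable fun x : ℝ => cexp (b * x ^ 2 + c * x) := by
    simpa using integrable_cexp_quadratic' hb c 0
  have hxg := integrable_ofReal_mul_cexp_quadratic hb c
  have hderiv (x : ℝ) : HasDerivAt (fun x : ℝ => cexp (b * x ^ 2 + c * x))
      (2 * b * ((x : ℂ) * cexp (b * x ^ 2 + c * x)) + c * cexp (b * x ^ 2 + c * x)) x := by
    have hid : HasDerivAt (fun y : ℝ => (y : ℂ)) 1 x := (hasDerivAt_id x).ofReal_comp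
    have hquad : HasDerivAt (fun y : ℝ => b * (y : ℂ) ^ 2 + c * y) (2 * b * x + c) x := by
      refine (((hid.pow 2).const_mul b).add (hid.const_mul c)).congr_deriv ?_
      norm_num; ring
    convert hquad.cexp using 1; ring
  have hzero := integral_eq_zero_of_hasDerivAt_of_integrable hderiv
    ((hxg.const_mul _).add (hg.const_mul _)) hg
  rw [integral_add (hxg.const_mul _) (hg.const_mul _), integral_const_mul, integral_const_mul]
    at hzero
  have hgauss : ∫ x : ℝ, cexp (b * x ^ 2 + c * x) =
      (Real.pi / -b) ^ (1 / 2 : ℂ) * cexp (-c ^ 2 / (4 * b)) := by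
    simpa [neg_div] using integral_cexp_quadratic hb c 0
  rw [← hgauss, div_mul_eq_mul_div, eq_div_iff (mul_ne_zero two_ne_zero hb0)]
  linear_combination hzero

theorem integral_comp_linearMap {E F : Type*} [NormedAddCommGroup E] [NormedSpace ℝ E]
    [MeasurableSpace E] [BorelSpace E] [FiniteDimensional ℝ E] [NormedAddCommGroup F]
    [NormedSpace ℝ F] (μ : Measure E) [μ.IsAddHaarMeasure] {f : E →ₗ[ℝ] E}
    (hf : LinearMap.det f ≠ 0) (g : E → F) :
    ∫ x, g (f x) ∂μ = |(LinearMap.det f)⁻¹| • ∫ x, g x ∂μ := by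
  have hemb : MeasurableEmbedding f :=
    (f.equivOfDetNeZero hf).toContinuousLinearEquiv.toHomeomorph.measurableEmbedding
  rw [← hemb.integral_map, Measure.map_linearMap_addHaar_eq_smul_addHaar μ hf,
    integral_smul_measure, ENNReal.toReal_ofReal (abs_nonneg _)]

theorem integral_eq_two_smul_integral_comp_add_sub {F : Type*} [NormedAddCommGroup F]
    [NormedSpace ℝ F] (g : ℝ × ℝ → F) :
    ∫ p, g p = (2 : ℝ) • ∫ p : ℝ × ℝ, g (p.1 + p.2, p.1 - p.2) := by
  let T := Matrix.toLin (Module.Basis.finTwoProd ℝ) (Module.Basis.finTwoProd ℝ) !![1, 1; 1, -1]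
  have hdet : LinearMap.det T = -2 := by
    rw [LinearMap.det_toLin, Matrix.det_fin_two_of]; norm_num
  have hT := integral_comp_linearMap volume (by rw [hdet]; norm_num : LinearMap.det T ≠ 0) g
  simp only [T, Matrix.toLin_finTwoProd_apply, hdet, one_mul, neg_one_mul, ← sub_eq_add_neg]
    at hT
  rw [hT, smul_smul]
  norm_num

noncomputable def rotatedIntegrand (a c : ℂ) (u v : ℝ) : ℂ :=
  cexp (-a * (u ^ 2 + v ^ 2)) * (v / u : ℝ) * (cexp (c * u * v) - cexp (-(c * u * v)))

theorem norm_rotatedIntegrand_le (a c : ℂ) (u v : ℝ) :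
    ‖rotatedIntegrand a c u v‖ ≤
      2 * ‖c‖ * (Real.exp (-(a.re - |c.re| / 2) * u ^ 2) *
        (v ^ 2 * Real.exp (-(a.re - |c.re| / 2) * v ^ 2))) := by
  rcases eq_or_ne u 0 with rfl | hu
  · simp only [rotatedIntegrand, div_zero, ofReal_zero, mul_zero, zero_mul, norm_zero]
    positivity
  have hre₀ : (-a * ((u : ℂ) ^ 2 + (v : ℂ) ^ 2)).re = -a.re * (u ^ 2 + v ^ 2) := by
    rw [← ofReal_pow, ← ofReal_pow, ← ofReal_add, re_mul_ofReal, neg_re]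
  have hre : (c * u * v).re = c.re * (u * v) := by
    simp only [mul_re, ofReal_re, ofReal_im, mul_zero, sub_zero, mul_im, zero_add]; ring
  have hnorm : ‖c * u * v‖ = ‖c‖ * (|u| * |v|) := by simp [mul_assoc]
  have hsinh := norm_cexp_sub_cexp_neg_le (c * u * v)
  rw [hre, hnorm] at hsinh
  have hexp : -a.re * (u ^ 2 + v ^ 2) + |c.re * (u * v)| ≤
      -(a.re - |c.re| / 2) * u ^ 2 + -(a.re - |c.re| / 2) * v ^ 2 := by
    have huv := two_mul_le_add_sq |u| |v|
    rw [sq_abs, sq_abs] at huv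
    have := mul_le_mul_of_nonneg_left huv (abs_nonneg c.re)
    rw [abs_mul, abs_mul]; linarith
  calc ‖rotatedIntegrand a c u v‖
      = Real.exp (-a.re * (u ^ 2 + v ^ 2)) * (|v| / |u|) *
          ‖cexp (c * u * v) - cexp (-(c * u * v))‖ := by
        simp only [rotatedIntegrand, norm_mul, norm_exp, hre₀, norm_real, Real.norm_eq_abs,
          abs_div]
    _ ≤ Real.exp (-a.re * (u ^ 2 + v ^ 2)) * (|v| / |u|) *
          (2 * (‖c‖ * (|u| * |v|)) * Real.exp |c.re * (u * v)|) := by gcongr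
    _ = 2 * ‖c‖ * (v ^ 2 * Real.exp (-a.re * (u ^ 2 + v ^ 2) + |c.re * (u * v)|)) := by
        rw [Real.exp_add, ← sq_abs v]; field_simp
    _ ≤ _ := by
        rw [mul_left_comm (Real.exp _), ← Real.exp_add]
        gcongr

theorem integrable_rotatedIntegrand {a c : ℂ} (h : |c.re| < 2 * a.re) :
    Integrable fun p : ℝ × ℝ => rotatedIntegrand a c p.1 p.2 := by
  have hε : 0 < a.re - |c.re| / 2 := by linarith
  have hdom := ((integrable_exp_neg_mul_sq hε).mul_prod
    (integrable_rpow_mul_exp_neg_mul_sq hε (by norm_num : (-1 : ℝ) < 2))).const_mul (2 * ‖c‖)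
  rw [← Measure.volume_eq_prod] at hdom
  refine hdom.mono' ?_ (ae_of_all _ fun p => ?_)
  · unfold rotatedIntegrand; apply Measurable.aestronglyMeasurable; fun_prop
  · simpa [Real.rpow_two] using norm_rotatedIntegrand_le a c p.1 p.2

theorem integral_rotatedIntegrand_inner {a : ℂ} (ha : 0 < a.re) (c : ℂ) {u : ℝ} (hu : u ≠ 0) :
    ∫ v, rotatedIntegrand a c u v =
      c / a * (Real.pi / a) ^ (1 / 2 : ℂ) * cexp (-(a - c ^ 2 / (4 * a)) * u ^ 2) := by
  have ha' : (-a).re < 0 := by simpa using ha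
  have ha0 : a ≠ 0 := by rintro rfl; simp at ha
  have huC : (u : ℂ) ≠ 0 := ofReal_ne_zero.2 hu
  have hsplit (v : ℝ) : rotatedIntegrand a c u v = cexp (-a * u ^ 2) / u *
      (v * cexp (-a * v ^ 2 + c * u * v) - v * cexp (-a * v ^ 2 + -(c * u) * v)) := by
    simp only [rotatedIntegrand, ofReal_div, Complex.exp_add, mul_add, neg_mul]
    field_simp
  simp_rw [hsplit]
  rw [integral_const_mul, integral_sub (integrable_ofReal_mul_cexp_quadratic ha' _)
    (integrable_ofReal_mul_cexp_quadratic ha' _), integral_ofReal_mul_cexp_quadratic ha',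
    integral_ofReal_mul_cexp_quadratic ha', neg_neg]
  have hexp : cexp (-a * u ^ 2) * cexp (-(c * u) ^ 2 / (4 * -a)) =
      cexp (-(a - c ^ 2 / (4 * a)) * u ^ 2) := by
    rw [← Complex.exp_add]; congr 1; field_simp; ring
  rw [neg_sq, ← hexp]
  field_simp
  ring

theorem re_sub_sq_div_pos {a c : ℂ} (h : |c.re| < 2 * a.re) : 0 < (a - c ^ 2 / (4 * a)).re := by
  have hp : 0 < (2 * a - c).re := by
    simp only [sub_re, mul_re, re_ofNat, im_ofNat, zero_mul, sub_zero, sub_pos]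
    linarith [le_abs_self c.re]
  have hq : 0 < (2 * a + c).re := by
    simp only [add_re, mul_re, re_ofNat, im_ofNat, zero_mul, sub_zero]
    linarith [neg_abs_le c.re]
  have ha0 : a ≠ 0 := by rintro rfl; simp only [zero_re, mul_zero] at h; linarith [abs_nonneg c.re]
  have hp0 : 2 * a - c ≠ 0 := by rintro h; simp [h] at hp
  have hq0 : 2 * a + c ≠ 0 := by rintro h; simp [h] at hq
  have : a - c ^ 2 / (4 * a) = ((2 * a - c)⁻¹ + (2 * a + c)⁻¹)⁻¹ := by
    rw [inv_add_inv hp0 hq0, inv_div]; field_simp; ring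
  rw [this]
  exact re_inv_pos (by simpa using add_pos (re_inv_pos hp) (re_inv_pos hq))

theorem integral_rotatedIntegrand {a c : ℂ} (h : |c.re| < 2 * a.re) :
    ∫ p : ℝ × ℝ, rotatedIntegrand a c p.1 p.2 =
      c / a * (Real.pi / a) ^ (1 / 2 : ℂ) * (Real.pi / (a - c ^ 2 / (4 * a))) ^ (1 / 2 : ℂ) := by
  have ha : 0 < a.re := by linarith [abs_nonneg c.re]
  have hint := integrable_rotatedIntegrand h
  rw [Measure.volume_eq_prod] at hint ⊢
  rw [integral_prod _ hint, ← integral_gaussian_complex (re_sub_sq_div_pos h),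
    ← integral_const_mul]
  exact integral_congr_ae <| (Measure.ae_ne volume 0).mono fun u hu =>
    integral_rotatedIntegrand_inner ha c hu

theorem integrand_add_sub_eq_rotatedIntegrand (α β : ℂ) (u v : ℝ) :
    cexp (-((((u + v) ^ 2 + (u - v) ^ 2) / 2 : ℝ) : ℂ)) *
        ((((u + v) - (u - v)) / ((u + v) + (u - v)) : ℝ) : ℂ) *
        (cexp (α * ((u + v : ℝ) : ℂ) ^ 2 + β * ((u - v : ℝ) : ℂ) ^ 2) -
          cexp (α * ((u - v : ℝ) : ℂ) ^ 2 + β * ((u + v : ℝ) : ℂ) ^ 2)) =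
      rotatedIntegrand (1 - α - β) (2 * (α - β)) u v := by
  have hratio : ((u + v) - (u - v)) / ((u + v) + (u - v)) = v / u := by
    rw [show (u + v) - (u - v) = 2 * v by ring, show (u + v) + (u - v) = 2 * u by ring,
      mul_div_mul_left _ _ two_ne_zero]
  have hfactor (A B C r : ℂ) :
      cexp A * r * (cexp B - cexp C) = r * (cexp (A + B) - cexp (A + C)) := by
    rw [Complex.exp_add, Complex.exp_add]; ring
  simp only [rotatedIntegrand, hratio, hfactor]
  congr 3 <;> push_cast <;> ring

/-- Lemma `intgauss`: the Gaussian double integral identity. -/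
theorem stmt0 (α β : ℂ) (hα : α.re < 1/2) (hβ : β.re < 1/2) :
    (∫ p : ℝ × ℝ,
      Complex.exp (-(((p.1^2 + p.2^2)/2 : ℝ) : ℂ)) *
        (((p.1 - p.2)/(p.1 + p.2) : ℝ) : ℂ) *
        (Complex.exp (α * (p.1:ℂ)^2 + β * (p.2:ℂ)^2) -
          Complex.exp (α * (p.2:ℂ)^2 + β * (p.1:ℂ)^2)))
    = 4 * (Real.pi : ℂ) * (α - β) /
        ((1 - α - β) * (1 - 2*α) ^ ((1:ℂ)/2) * (1 - 2*β) ^ ((1:ℂ)/2)) := by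
  have hp : 0 < (1 - 2 * α).re := by
    simp only [sub_re, one_re, mul_re, re_ofNat, im_ofNat, zero_mul, sub_zero, sub_pos]; linarith
  have hq : 0 < (1 - 2 * β).re := by
    simp only [sub_re, one_re, mul_re, re_ofNat, im_ofNat, zero_mul, sub_zero, sub_pos]; linarith
  have ha : 0 < (1 - α - β).re := by simp only [sub_re, one_re]; linarith
  have hac : |(2 * (α - β)).re| < 2 * (1 - α - β).re := by
    simp only [mul_re, sub_re, one_re, re_ofNat, im_ofNat, zero_mul, sub_zero]
    rw [abs_lt]; constructor <;> linarith
  have ha0 : 1 - α - β ≠ 0 := by rintro h; simp [h] at ha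
  rw [integral_eq_two_smul_integral_comp_add_sub]
  simp only [integrand_add_sub_eq_rotatedIntegrand]
  rw [integral_rotatedIntegrand hac, mul_assoc, cpow_half_div_mul_cpow_half_div
    (by simp [Real.pi_pos]) ha (re_sub_sq_div_pos hac) hp hq (by field_simp; ring), real_smul]
  push_cast
  simp only [div_eq_mul_inv, mul_inv]
  ring
end

section
/- Let ϱ₁, ..., ϱ_M ∈ (0, 1/2) be pairwise distinct real numbers such that the antisymmetric matrix G̃ = [(ϱ_j - ϱ_k)/(1 - ϱ_j - ϱ_k)]_{j,k=1}^M is invertible, with inverse C̃ = [c̃_{jk}]. Define the rational functions f_j(z) = Σ_{l=1}^M ((z - ϱ_l)/(1 - z - ϱ_l)) c̃_{lj}. Then for each j, f_j(z) = ∏_{k≠j} ((z - ϱ_k)/(1 - z - ϱ_k)) · ((1 - ϱ_j - ϱ_k)/(ϱ_j - ϱ_k)) for all z where both sides are defined. -/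
/-!
Multiplied by the common denominator `∏ₘ (1 - z - ϱₘ)`, both sides become polynomials
of degree at most `M`. Both sides equal `δₖⱼ` at `z = ϱₖ` (the left one because `G̃ C̃ = 1`), and
both numerators vanish at `z = 1 - ϱⱼ`: the product one visibly, the sum one because the only
summand without the factor `ϱⱼ - ϱⱼ` carries `c̃ⱼⱼ`, which is zero as `C̃` is antisymmetric.
Agreement at these `M + 1` points forces the numerators to coincide.
-/

open Polynomial Finset Matrix

theorem Finset.sum_div_mul_prod {ι K : Type*} [Field K] [DecidableEq ι] {s : Finset ι}
    {a b : ι → K} (hb : ∀ i ∈ s, b i ≠ 0) :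
    (∑ i ∈ s, a i / b i) * ∏ i ∈ s, b i = ∑ i ∈ s, a i * ∏ k ∈ s.erase i, b k := by
  rw [sum_mul]
  refine sum_congr rfl fun i hi => ?_
  rw [← mul_prod_erase s b hi, ← mul_assoc, div_mul_cancel₀ _ (hb i hi)]

theorem Polynomial.natDegree_mul_prod_erase_le {ι R : Type*} [CommSemiring R] [DecidableEq ι]
    {s : Finset ι} {i : ι} (hi : i ∈ s) {p : R[X]} {f : ι → R[X]} (hp : p.natDegree ≤ 1)
    (hf : ∀ k ∈ s, (f k).natDegree ≤ 1) : (p * ∏ k ∈ s.erase i, f k).natDegree ≤ #s := by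
  have hprod : (∏ k ∈ s.erase i, f k).natDegree ≤ #(s.erase i) := by
    refine (natDegree_prod_le _ _).trans ?_
    simpa using sum_le_card_nsmul _ _ 1 fun k hk => hf k (mem_of_mem_erase hk)
  rw [← card_erase_add_one hi]
  exact natDegree_mul_le.trans (by omega)

theorem Polynomial.eq_of_natDegree_le_of_eval_eq {ι K : Type*} [Fintype ι] [Field K]
    {v : ι → K} (hv : Function.Injective v) {a : K} (ha : ∀ i, v i ≠ a) {p q : K[X]}
    (hp : p.natDegree ≤ Fintype.card ι) (hq : q.natDegree ≤ Fintype.card ι)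
    (hpq : ∀ i, p.eval (v i) = q.eval (v i)) (hpqa : p.eval a = q.eval a) : p = q := by
  classical
  refine eq_of_degree_sub_lt_of_eval_finset_eq (insert a (univ.map ⟨v, hv⟩)) ?_ ?_
  · rw [card_insert_of_notMem (by simpa using ha), card_map, card_univ]
    refine degree_le_natDegree.trans_lt ?_
    exact_mod_cast Nat.lt_succ_of_le ((natDegree_sub_le p q).trans (max_le hp hq))
  · simp only [mem_insert, mem_map, mem_univ, true_and, Function.Embedding.coeFn_mk]
    rintro x (rfl | ⟨i, rfl⟩)
    exacts [hpqa, hpq i]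

theorem Matrix.inv_neg {n K : Type*} [Fintype n] [DecidableEq n] [CommRing K]
    (A : Matrix n n K) : (-A)⁻¹ = -A⁻¹ := by
  by_cases hA : IsUnit A.det
  · exact inv_eq_left_inv (by rw [neg_mul_neg, nonsing_inv_mul _ hA])
  · have hnA : ¬IsUnit (-A).det := by
      rw [det_neg, IsUnit.mul_iff]
      exact fun h => hA h.2
    rw [nonsing_inv_apply_not_isUnit _ hA, nonsing_inv_apply_not_isUnit _ hnA, neg_zero]

theorem Matrix.inv_apply_self_eq_zero_of_transpose_eq_neg {n K : Type*} [Fintype n]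
    [DecidableEq n] [Field K] [NeZero (2 : K)] {A : Matrix n n K} (hA : Aᵀ = -A) (i : n) :
    A⁻¹ i i = 0 := by
  have hinv : A⁻¹ᵀ = -A⁻¹ := by rw [transpose_nonsing_inv, hA, Matrix.inv_neg]
  have h : A⁻¹ i i = -A⁻¹ i i := congrFun (congrFun hinv i) i
  have h2 : (2 : K) * A⁻¹ i i = 0 := by linear_combination h
  exact (mul_eq_zero.1 h2).resolve_left two_ne_zero

theorem transpose_eq_neg_of_apply_eq_div {K ι : Type*} [Field K] {ϱ : ι → K} {G : Matrix ι ι K}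
    (hG : ∀ a b, G a b = (ϱ a - ϱ b) / (1 - ϱ a - ϱ b)) : Gᵀ = -G := by
  ext a b
  rw [transpose_apply, neg_apply, hG, hG, ← neg_div]
  ring_nf

section CauchyLike

variable {K ι : Type*} [Field K] [Fintype ι] [DecidableEq ι] (ϱ : ι → K)

/-- `clearedSum ϱ c` and `clearedProd ϱ j` are the two sides of the identity multiplied by
`∏ₘ (1 - X - ϱₘ)`, with `c` the `j`-th column of `C̃`. -/
noncomputable def clearedSum (c : ι → K) : K[X] :=
  ∑ l, C (c l) * ((X - C (ϱ l)) * ∏ m ∈ univ.erase l, (1 - X - C (ϱ m)))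

noncomputable def clearedProd (j : ι) : K[X] :=
  (1 - X - C (ϱ j)) * ∏ k ∈ univ.erase j, C ((1 - ϱ j - ϱ k) / (ϱ j - ϱ k)) * (X - C (ϱ k))

variable {ϱ}

theorem natDegree_clearedSum_le (c : ι → K) :
    (clearedSum ϱ c).natDegree ≤ Fintype.card ι := by
  refine natDegree_sum_le_of_forall_le _ _ fun l _ => natDegree_C_mul_le _ _ |>.trans ?_
  exact natDegree_mul_prod_erase_le (mem_univ l) (by compute_degree) fun m _ => by compute_degree

theorem natDegree_clearedProd_le (j : ι) :
    (clearedProd ϱ j).natDegree ≤ Fintype.card ι :=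
  natDegree_mul_prod_erase_le (mem_univ j) (by compute_degree) fun k _ => by compute_degree

theorem eval_clearedSum (c : ι → K) {x : K} (hx : ∀ l, 1 - x - ϱ l ≠ 0) :
    (clearedSum ϱ c).eval x = (∑ l, (x - ϱ l) / (1 - x - ϱ l) * c l) * ∏ m, (1 - x - ϱ m) := by
  simp_rw [div_mul_eq_mul_div, sum_div_mul_prod fun l _ => hx l]
  simp [clearedSum, eval_finsetSum, eval_prod, mul_comm, mul_assoc]

theorem eval_clearedProd (j : ι) {x : K} (hx : ∀ l, 1 - x - ϱ l ≠ 0) :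
    (clearedProd ϱ j).eval x = (∏ k ∈ univ.erase j,
      (x - ϱ k) / (1 - x - ϱ k) * ((1 - ϱ j - ϱ k) / (ϱ j - ϱ k))) * ∏ m, (1 - x - ϱ m) := by
  rw [← mul_prod_erase _ _ (mem_univ j), mul_left_comm, ← prod_mul_distrib]
  simp only [clearedProd, eval_mul, eval_sub, eval_one, eval_X, eval_C, eval_prod]
  congr 1
  refine prod_congr rfl fun k _ => ?_
  field_simp [hx k]

theorem eval_clearedSum_one_sub {c : ι → K} {j : ι} (hc : c j = 0) :
    (clearedSum ϱ c).eval (1 - ϱ j) = 0 := by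
  simp only [clearedSum, eval_finsetSum, eval_mul, eval_C, eval_prod, eval_sub, eval_one, eval_X]
  refine sum_eq_zero fun l _ => ?_
  rcases eq_or_ne l j with rfl | hl
  · rw [hc, zero_mul]
  · rw [prod_eq_zero (mem_erase.2 ⟨hl.symm, mem_univ j⟩) (by ring), mul_zero, mul_zero]

theorem eval_clearedProd_one_sub (j : ι) : (clearedProd ϱ j).eval (1 - ϱ j) = 0 := by
  simp [clearedProd]

theorem prod_erase_div_mul_div_eq_one_apply (hϱ : Function.Injective ϱ)
    (hσ : ∀ a b, 1 - ϱ a - ϱ b ≠ 0) (j k : ι) :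
    ∏ l ∈ univ.erase j, (ϱ k - ϱ l) / (1 - ϱ k - ϱ l) * ((1 - ϱ j - ϱ l) / (ϱ j - ϱ l)) =
      (1 : Matrix ι ι K) k j := by
  rcases eq_or_ne k j with rfl | hkj
  · refine (prod_eq_one fun l hl => ?_).trans (one_apply_eq k).symm
    have hl : ϱ k - ϱ l ≠ 0 := sub_ne_zero.2 (hϱ.ne (mem_erase.1 hl).1.symm)
    field_simp [hσ k l]
  · rw [one_apply_ne hkj, prod_eq_zero (mem_erase.2 ⟨hkj, mem_univ k⟩) (by simp)]

theorem sum_div_mul_inv_apply_eq_one_apply {G : Matrix ι ι K}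
    (hG : ∀ a b, G a b = (ϱ a - ϱ b) / (1 - ϱ a - ϱ b)) (hdet : IsUnit G.det) (j k : ι) :
    ∑ l, (ϱ k - ϱ l) / (1 - ϱ k - ϱ l) * G⁻¹ l j = (1 : Matrix ι ι K) k j := by
  simp only [← mul_nonsing_inv G hdet, mul_apply, hG]

theorem sum_div_mul_inv_apply_eq_prod [NeZero (2 : K)] (hϱ : Function.Injective ϱ)
    (hσ : ∀ a b, 1 - ϱ a - ϱ b ≠ 0) {G : Matrix ι ι K}
    (hG : ∀ a b, G a b = (ϱ a - ϱ b) / (1 - ϱ a - ϱ b)) (hdet : IsUnit G.det) (j : ι) {z : K}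
    (hz : ∀ l, 1 - z - ϱ l ≠ 0) :
    ∑ l, (z - ϱ l) / (1 - z - ϱ l) * G⁻¹ l j =
      ∏ k ∈ univ.erase j, (z - ϱ k) / (1 - z - ϱ k) * ((1 - ϱ j - ϱ k) / (ϱ j - ϱ k)) := by
  have hpoly : clearedSum ϱ (fun l => G⁻¹ l j) = clearedProd ϱ j := by
    refine eq_of_natDegree_le_of_eval_eq hϱ (a := 1 - ϱ j) (fun i => ?_)
      (natDegree_clearedSum_le _) (natDegree_clearedProd_le j) (fun k => ?_) ?_
    · exact fun h => hσ j i (by rw [h]; ring)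
    · rw [eval_clearedSum _ (hσ k), eval_clearedProd _ (hσ k),
        sum_div_mul_inv_apply_eq_one_apply hG hdet, prod_erase_div_mul_div_eq_one_apply hϱ hσ]
    · have hdiag :=
        inv_apply_self_eq_zero_of_transpose_eq_neg (transpose_eq_neg_of_apply_eq_div hG) j
      rw [eval_clearedSum_one_sub (c := fun l => G⁻¹ l j) hdiag, eval_clearedProd_one_sub]
  have hD : ∏ m, (1 - z - ϱ m) ≠ 0 := prod_ne_zero_iff.2 fun m _ => hz m
  have := congrArg (eval z) hpoly
  rwa [eval_clearedSum _ hz, eval_clearedProd _ hz, mul_left_inj' hD] at this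

end CauchyLike

theorem stmt5_general (M : ℕ) (ϱ : Fin M → ℝ)
    (hmem : ∀ i, ϱ i ∈ Set.Ioo (0:ℝ) (1/2))
    (hdist : Function.Injective ϱ)
    (G : Matrix (Fin M) (Fin M) ℂ)
    (hG : ∀ j k, G j k = (((ϱ j - ϱ k)/(1 - ϱ j - ϱ k) : ℝ) : ℂ))
    (hinv : IsUnit G.det)
    (j : Fin M) (z : ℂ) (hz : ∀ l, 1 - z - (ϱ l : ℂ) ≠ 0) :
    (∑ l, (z - (ϱ l : ℂ))/(1 - z - (ϱ l : ℂ)) * G⁻¹ l j)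
    = ∏ k ∈ Finset.univ.erase j,
        ((z - (ϱ k : ℂ))/(1 - z - (ϱ k : ℂ))) *
          (((1 - ϱ j - ϱ k)/(ϱ j - ϱ k) : ℝ) : ℂ) := by
  have hσ : ∀ a b, (1 : ℂ) - ϱ a - ϱ b ≠ 0 := fun a b => by
    have ha := (hmem a).2
    have hb := (hmem b).2
    exact_mod_cast (show 1 - ϱ a - ϱ b ≠ 0 by linarith)
  push_cast at hG ⊢
  exact sum_div_mul_inv_apply_eq_prod (Complex.ofReal_injective.comp hdist) hσ hG hinv j hz

/-- The identity \eqref{frelation2} for the inverse of the Gram-type matrix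
`G̃ = [(ϱ_j - ϱ_k)/(1 - ϱ_j - ϱ_k)]`. -/
theorem stmt5 (M : ℕ) (hM : 0 < M) (ϱ : Fin M → ℝ)
    (hmem : ∀ i, ϱ i ∈ Set.Ioo (0:ℝ) (1/2))
    (hdist : Function.Injective ϱ)
    (G : Matrix (Fin M) (Fin M) ℂ)
    (hG : ∀ j k, G j k = (((ϱ j - ϱ k)/(1 - ϱ j - ϱ k) : ℝ) : ℂ))
    (hinv : IsUnit G.det)
    (j : Fin M) (z : ℂ) (hz : ∀ l, 1 - z - (ϱ l : ℂ) ≠ 0) :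
    (∑ l, (z - (ϱ l : ℂ))/(1 - z - (ϱ l : ℂ)) * G⁻¹ l j)
    = ∏ k ∈ Finset.univ.erase j,
        ((z - (ϱ k : ℂ))/(1 - z - (ϱ k : ℂ))) *
          (((1 - ϱ j - ϱ k)/(ϱ j - ϱ k) : ℝ) : ℂ) :=
  stmt5_general M ϱ hmem hdist G hG hinv j z hz
end

section
/- Define φ₁(κ; u) = (1/(2πi)) ∫_{C_<} e^{(w-κ)³/3 - u(w-κ)} (2w)^{-1/2} dw, where C_< is a contour from e^{iπ/3}∞ to a point δ > 0 on the positive real axis and then to e^{-iπ/3}∞, avoiding the branch cut of √(2w) on the negative real axis. Then φ₁ satisfies the third-order linear ODE (in u): φ₁''' - κ(φ₁'' - uφ₁) - uφ₁' - (1/2)φ₁ = 0. -/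
/-!
Differentiating under the integral sign `n` times in `u` multiplies the integrand
`F(w) = e^{(w-κ)³/3 - u(w-κ)} (2w)^{-1/2}` by `(κ - w)^n`, so the left-hand side of the ODE is
`(2πi)⁻¹ ∫_{C_<} q(w) F(w) dw` with `q(w) = (κ-w)³ - κ(κ-w)² - u(κ-w) + κu - 1/2`.
Since `d/dw (2w F(w)) = -2 q(w) F(w)`, each ray of `C_<` contributes the boundary value of
`w F(w)` at `δ` (the contributions at infinity vanish), and the two contributions cancel.
All integrals converge because on the ray `δ + t e^{∓iπ/3}` the real part of the exponent is
a cubic in `t` with leading term `-t³/3`.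
-/

open MeasureTheory

/-- The integrand `F(κ,u;w) = e^{(w-κ)³/3 - u(w-κ)} / √(2w)`. -/
noncomputable def airyIntegrand (κ u : ℝ) (w : ℂ) : ℂ :=
  Complex.exp ((w - κ)^3/3 - u * (w - κ)) * (2*w) ^ (-(1/2) : ℂ)

/-- `φ₁(κ;u)`: the contour integral of `airyIntegrand` along `C_<`, which goes
from `e^{iπ/3}∞` to `δ > 0` and then to `e^{-iπ/3}∞`, parametrized by the two
rays `δ + t·e^{∓iπ/3}`, `t ∈ (0,∞)`. -/
noncomputable def phi1 (κ δ : ℝ) (u : ℝ) : ℂ :=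
  (2 * (Real.pi : ℂ) * Complex.I)⁻¹ *
    ∫ t in Set.Ioi (0:ℝ),
      (airyIntegrand κ u ((δ:ℂ) + t * Complex.exp (-(Real.pi/3 : ℝ) * Complex.I)) *
          Complex.exp (-(Real.pi/3 : ℝ) * Complex.I)
        - airyIntegrand κ u ((δ:ℂ) + t * Complex.exp ((Real.pi/3 : ℝ) * Complex.I)) *
          Complex.exp ((Real.pi/3 : ℝ) * Complex.I))

open Set Filter Topology

noncomputable def cubicExp (A B C t : ℝ) : ℝ := Real.exp (A + B * t + C * t ^ 2 - t ^ 3 / 3)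

section CubicExp

variable {A B C t : ℝ}

lemma cubicExp_le_cubicExp {A' B' : ℝ} (hA : A ≤ A') (hB : B ≤ B') (ht : 0 ≤ t) :
    cubicExp A B C t ≤ cubicExp A' B' C t := by
  unfold cubicExp
  gcongr

lemma pow_mul_cubicExp_le {x a b : ℝ} (hx : 0 ≤ x) (hxt : x ≤ a + b * t) (n : ℕ) :
    x ^ n * cubicExp A B C t ≤ cubicExp (A + n * a) (B + n * b) C t := by
  have hpow : x ^ n ≤ Real.exp (n * (a + b * t)) := by
    rw [Real.exp_nat_mul]
    gcongr
    linarith [Real.add_one_le_exp (a + b * t)]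
  calc x ^ n * cubicExp A B C t ≤ Real.exp (n * (a + b * t)) * cubicExp A B C t := by
        unfold cubicExp; gcongr
    _ = cubicExp (A + n * a) (B + n * b) C t := by
        unfold cubicExp; rw [← Real.exp_add]; ring_nf

lemma eventually_cubicExp_le_exp_neg : ∀ᶠ t in atTop, cubicExp A B C t ≤ Real.exp (-t) := by
  filter_upwards [eventually_ge_atTop 1, eventually_ge_atTop (3 * (|A| + |B| + |C| + 1))]
    with t h1 hT
  unfold cubicExp
  gcongr
  have ht2 : 1 ≤ t ^ 2 := one_le_pow₀ h1
  have hA : A ≤ |A| * t ^ 2 := (le_abs_self A).trans (le_mul_of_one_le_right (abs_nonneg A) ht2)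
  have hB : B * t ≤ |B| * t ^ 2 := by
    have htt : t ≤ t ^ 2 := by nlinarith
    calc B * t ≤ |B| * t := mul_le_mul_of_nonneg_right (le_abs_self B) (by linarith)
      _ ≤ |B| * t ^ 2 := mul_le_mul_of_nonneg_left htt (abs_nonneg B)
  have hC : C * t ^ 2 ≤ |C| * t ^ 2 := by nlinarith [le_abs_self C]
  nlinarith

variable (A B C)

lemma integrableOn_cubicExp : IntegrableOn (cubicExp A B C) (Ioi 0) := by
  refine integrable_of_isBigO_exp_neg one_pos (by unfold cubicExp; fun_prop) ?_
  refine Asymptotics.IsBigO.of_bound 1 ?_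
  filter_upwards [eventually_cubicExp_le_exp_neg] with t ht
  simpa [cubicExp, abs_of_pos (Real.exp_pos _)] using ht

lemma tendsto_cubicExp_atTop : Tendsto (cubicExp A B C) atTop (𝓝 0) :=
  squeeze_zero' (Eventually.of_forall fun _ => (Real.exp_pos _).le)
    eventually_cubicExp_le_exp_neg Real.tendsto_exp_neg_atTop_nhds_zero

end CubicExp

lemma Complex.norm_cpow_neg_half_le {z : ℂ} {c : ℝ} (hc : 0 < c) (hz : c ≤ z.re) :
    ‖z ^ (-(1/2) : ℂ)‖ ≤ c ^ (-(1/2) : ℝ) := by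
  have hz0 : z ≠ 0 := fun h => by simp [h] at hz; linarith
  rw [Complex.norm_cpow_of_ne_zero hz0]
  norm_num
  exact Real.rpow_le_rpow_of_nonpos hc (hz.trans (Complex.re_le_norm z)) (by norm_num)

lemma hasDerivAt_ofReal_mul_add (a e : ℂ) (t : ℝ) : HasDerivAt (fun t : ℝ => a + t * e) e t := by
  simpa using (((hasDerivAt_id t).ofReal_comp).mul_const e).const_add a

lemma integral_Ioi_ray_eq_neg {F f : ℂ → ℂ} {a e : ℂ}
    (hF : ∀ t : ℝ, 0 ≤ t → HasDerivAt F (f (a + t * e)) (a + t * e))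
    (hf : IntegrableOn (fun t : ℝ => f (a + t * e) * e) (Ioi 0))
    (hlim : Tendsto (fun t : ℝ => F (a + t * e)) atTop (𝓝 0)) :
    ∫ t in Ioi (0 : ℝ), f (a + t * e) * e = -F a := by
  rw [integral_Ioi_of_hasDerivAt_of_tendsto'
    (fun t ht => (hF t ht).comp t (hasDerivAt_ofReal_mul_add a e t)) hf hlim]
  simp

lemma hasDerivAt_airyIntegrand_param (κ u : ℝ) (w : ℂ) :
    HasDerivAt (fun u : ℝ => airyIntegrand κ u w) ((κ - w) * airyIntegrand κ u w) u := by
  unfold airyIntegrand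
  refine (((((hasDerivAt_id' u).ofReal_comp).mul_const (w - κ)).const_sub
    ((w - κ) ^ 3 / 3)).cexp.mul_const ((2 * w) ^ (-(1/2) : ℂ))).congr_deriv ?_
  push_cast
  ring

noncomputable def airyPrimitive (κ u : ℝ) (w : ℂ) : ℂ := 2 * w * airyIntegrand κ u w

lemma hasDerivAt_airyPrimitive (κ u : ℝ) {w : ℂ} (hw : 2 * w ∈ Complex.slitPlane) :
    HasDerivAt (airyPrimitive κ u)
      (-2 * ((κ - w) ^ 3 - κ * (κ - w) ^ 2 - u * (κ - w) + (κ * u - 1 / 2)) * airyIntegrand κ u w)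
      w := by
  have hw0 : 2 * w ≠ 0 := Complex.slitPlane_ne_zero hw
  have hw0' : w ≠ 0 := right_ne_zero_of_mul hw0
  have hlin : HasDerivAt (fun z : ℂ => 2 * z) 2 w := by simpa using (hasDerivAt_id w).const_mul 2
  have hE : HasDerivAt (fun z : ℂ => (z - κ) ^ 3 / 3 - u * (z - κ)) ((w - κ) ^ 2 - u) w := by
    refine (((((hasDerivAt_id' w).sub_const (κ : ℂ)).pow 3).div_const 3).sub
      (((hasDerivAt_id' w).sub_const (κ : ℂ)).const_mul (u : ℂ))).congr_deriv ?_
    push_cast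
    ring
  have h : HasDerivAt (fun z => 2 * z *
      (Complex.exp ((z - κ) ^ 3 / 3 - u * (z - κ)) * (2 * z) ^ (-(1/2) : ℂ))) _ w :=
    hlin.mul (hE.cexp.mul (hlin.cpow_const (c := -(1/2)) hw))
  unfold airyPrimitive airyIntegrand
  refine h.congr_deriv ?_
  rw [Complex.cpow_sub _ _ hw0, Complex.cpow_one]
  field_simp
  ring

lemma norm_add_ofReal_mul_le {e : ℂ} (he : ‖e‖ = 1) (c : ℂ) {t : ℝ} (ht : 0 ≤ t) :
    ‖c + t * e‖ ≤ ‖c‖ + 1 * t := by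
  calc ‖c + t * e‖ ≤ ‖c‖ + ‖(t : ℂ) * e‖ := norm_add_le _ _
    _ = ‖c‖ + 1 * t := by
      rw [norm_mul, he, Complex.norm_real, Real.norm_eq_abs, abs_of_nonneg ht]
      ring

section Ray

variable {e : ℂ} (he : e ^ 3 = -1)
include he

lemma norm_eq_one_of_pow_three_eq_neg_one : ‖e‖ = 1 := by
  have h : ‖e‖ ^ 3 = 1 := by rw [← norm_pow, he, norm_neg, norm_one]
  exact (pow_eq_one_iff_of_nonneg (norm_nonneg e) (by norm_num)).mp h

-- Together with `e ^ 3 = -1` this pins down `e = e^{±iπ/3}`, the directions of the rays of `C_<`.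
variable (hre : e.re = 1 / 2)
include hre

lemma re_sq_of_pow_three_eq_neg_one : (e ^ 2).re = -1 / 2 := by
  have hne : e + 1 ≠ 0 := fun h => by
    have := congrArg Complex.re h
    simp [hre] at this
    linarith
  have h : e ^ 2 = e - 1 := by
    have : (e + 1) * (e ^ 2 - (e - 1)) = 0 := by linear_combination he
    exact sub_eq_zero.mp ((mul_eq_zero.mp this).resolve_left hne)
  rw [h, Complex.sub_re, hre, Complex.one_re]
  norm_num

lemma re_airyExponent_ray (κ δ u t : ℝ) :
    ((((δ : ℂ) + t * e) - κ) ^ 3 / 3 - u * (((δ : ℂ) + t * e) - κ)).re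
      = ((δ - κ) ^ 3 / 3 - u * (δ - κ)) + ((δ - κ) ^ 2 - u) / 2 * t
        + (-(δ - κ) / 2) * t ^ 2 - t ^ 3 / 3 := by
  have hsq := re_sq_of_pow_three_eq_neg_one he hre
  have hexp : (((δ : ℂ) + t * e) - κ) ^ 3 / 3 - u * (((δ : ℂ) + t * e) - κ)
      = (((δ - κ) ^ 3 / 3 - u * (δ - κ) - t ^ 3 / 3 : ℝ) : ℂ)
        + (((δ - κ) ^ 2 * t - u * t : ℝ) : ℂ) * e + (((δ - κ) * t ^ 2 : ℝ) : ℂ) * e ^ 2 := by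
    push_cast
    linear_combination (t : ℂ) ^ 3 / 3 * he
  rw [hexp]
  simp only [Complex.add_re, Complex.re_ofReal_mul, Complex.ofReal_re, hre, hsq]
  ring

omit he in
lemma re_two_mul_ray (δ t : ℝ) : (2 * ((δ : ℂ) + t * e)).re = 2 * δ + t := by
  simp [hre]
  ring

lemma norm_airyIntegrand_ray_le {κ δ u M t : ℝ} (hδ : 0 < δ) (ht : 0 ≤ t) (hu : |u| ≤ M) :
    ‖airyIntegrand κ u (δ + t * e)‖ ≤ (2 * δ) ^ (-(1/2) : ℝ) *
      cubicExp (|δ - κ| ^ 3 / 3 + M * |δ - κ|) (((δ - κ) ^ 2 + M) / 2) (-(δ - κ) / 2) t := by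
  unfold airyIntegrand
  rw [norm_mul, mul_comm]
  have hexp : ‖Complex.exp ((((δ : ℂ) + t * e) - κ) ^ 3 / 3 - u * (((δ : ℂ) + t * e) - κ))‖
      ≤ cubicExp (|δ - κ| ^ 3 / 3 + M * |δ - κ|) (((δ - κ) ^ 2 + M) / 2) (-(δ - κ) / 2) t := by
    rw [Complex.norm_exp, re_airyExponent_ray he hre]
    refine cubicExp_le_cubicExp ?_ ?_ ht
    · have h1 : (δ - κ) ^ 3 ≤ |δ - κ| ^ 3 := by
        rw [← abs_pow]; exact le_abs_self _
      have h2 : -u * (δ - κ) ≤ M * |δ - κ| := by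
        rw [← abs_neg u] at hu
        exact (le_abs_self _).trans (by rw [abs_mul]; gcongr)
      linarith
    · linarith [neg_le_of_abs_le hu]
  gcongr
  exact Complex.norm_cpow_neg_half_le (by positivity) (by rw [re_two_mul_ray hre]; linarith)

lemma exists_norm_pow_mul_airyIntegrand_ray_le {κ δ M a b : ℝ} (hδ : 0 < δ) {p : ℝ → ℂ}
    (hp : ∀ t, 0 ≤ t → ‖p t‖ ≤ a + b * t) (n : ℕ) :
    ∃ K A B C : ℝ, ∀ t, 0 ≤ t → ∀ u, |u| ≤ M →
      ‖p t ^ n * airyIntegrand κ u (δ + t * e)‖ ≤ K * cubicExp A B C t := by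
  refine ⟨(2 * δ) ^ (-(1/2) : ℝ), |δ - κ| ^ 3 / 3 + M * |δ - κ| + n * a,
    ((δ - κ) ^ 2 + M) / 2 + n * b, -(δ - κ) / 2, fun t ht u hu => ?_⟩
  rw [norm_mul, norm_pow]
  calc ‖p t‖ ^ n * ‖airyIntegrand κ u (δ + t * e)‖
      ≤ ‖p t‖ ^ n * ((2 * δ) ^ (-(1/2) : ℝ) *
          cubicExp (|δ - κ| ^ 3 / 3 + M * |δ - κ|) (((δ - κ) ^ 2 + M) / 2) (-(δ - κ) / 2) t) := by
        gcongr; exact norm_airyIntegrand_ray_le he hre hδ ht hu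
    _ ≤ _ := by
        rw [mul_left_comm]
        gcongr
        exact pow_mul_cubicExp_le (norm_nonneg _) (hp t ht) n

end Ray

noncomputable def rayMomentIntegrand (κ δ : ℝ) (e : ℂ) (n : ℕ) (u t : ℝ) : ℂ :=
  ((κ : ℂ) - (δ + t * e)) ^ n * airyIntegrand κ u (δ + t * e) * e

noncomputable def rayMoment (κ δ : ℝ) (e : ℂ) (n : ℕ) (u : ℝ) : ℂ :=
  ∫ t in Ioi 0, rayMomentIntegrand κ δ e n u t

section RayMoment

variable {κ δ : ℝ} {e : ℂ}

lemma measurable_rayMomentIntegrand (n : ℕ) (u : ℝ) :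
    Measurable (rayMomentIntegrand κ δ e n u) := by
  unfold rayMomentIntegrand airyIntegrand
  fun_prop

lemma hasDerivAt_rayMomentIntegrand (n : ℕ) (u t : ℝ) :
    HasDerivAt (fun u => rayMomentIntegrand κ δ e n u t) (rayMomentIntegrand κ δ e (n + 1) u t)
      u := by
  unfold rayMomentIntegrand
  refine (((hasDerivAt_airyIntegrand_param κ u _).const_mul _).mul_const e).congr_deriv ?_
  ring

variable (he : e ^ 3 = -1) (hre : e.re = 1 / 2) (hδ : 0 < δ)
include he hre hδ

lemma exists_norm_rayMomentIntegrand_le (n : ℕ) (M : ℝ) :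
    ∃ K A B C : ℝ, ∀ t, 0 ≤ t → ∀ u, |u| ≤ M →
      ‖rayMomentIntegrand κ δ e n u t‖ ≤ K * cubicExp A B C t := by
  have hp (t : ℝ) (ht : 0 ≤ t) : ‖(κ : ℂ) - (δ + t * e)‖ ≤ |δ - κ| + 1 * t := by
    rw [norm_sub_rev, show (δ : ℂ) + t * e - κ = ((δ - κ : ℝ) : ℂ) + t * e by push_cast; ring]
    have h :=
      norm_add_ofReal_mul_le (norm_eq_one_of_pow_three_eq_neg_one he) ((δ - κ : ℝ) : ℂ) ht
    rwa [Complex.norm_real, Real.norm_eq_abs] at h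
  obtain ⟨K, A, B, C, hbound⟩ :=
    exists_norm_pow_mul_airyIntegrand_ray_le he hre (κ := κ) (M := M) hδ hp n
  refine ⟨K, A, B, C, fun t ht u hu => ?_⟩
  simpa [rayMomentIntegrand, norm_eq_one_of_pow_three_eq_neg_one he] using hbound t ht u hu

lemma integrableOn_rayMomentIntegrand (n : ℕ) (u : ℝ) :
    IntegrableOn (rayMomentIntegrand κ δ e n u) (Ioi 0) := by
  obtain ⟨K, A, B, C, hbound⟩ := exists_norm_rayMomentIntegrand_le he hre hδ (κ := κ) n |u|
  refine ((integrableOn_cubicExp A B C).const_mul K).mono'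
    (measurable_rayMomentIntegrand n u).aestronglyMeasurable ?_
  filter_upwards [ae_restrict_mem measurableSet_Ioi] with t ht
  exact hbound t ht.le u le_rfl

lemma hasDerivAt_rayMoment (n : ℕ) (u₀ : ℝ) :
    HasDerivAt (rayMoment κ δ e n) (rayMoment κ δ e (n + 1) u₀) u₀ := by
  obtain ⟨K, A, B, C, hbound⟩ :=
    exists_norm_rayMomentIntegrand_le he hre hδ (κ := κ) (n + 1) (|u₀| + 1)
  have hball {u : ℝ} (hu : u ∈ Metric.ball u₀ 1) : |u| ≤ |u₀| + 1 := by
    rw [Metric.mem_ball, Real.dist_eq] at hu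
    linarith [abs_sub_abs_le_abs_sub u u₀]
  refine (hasDerivAt_integral_of_dominated_loc_of_deriv_le (Metric.ball_mem_nhds u₀ one_pos)
    (Eventually.of_forall fun u => (measurable_rayMomentIntegrand n u).aestronglyMeasurable)
    (integrableOn_rayMomentIntegrand he hre hδ n u₀)
    (measurable_rayMomentIntegrand (n + 1) u₀).aestronglyMeasurable ?_
    ((integrableOn_cubicExp A B C).const_mul K) ?_).2
  · filter_upwards [ae_restrict_mem measurableSet_Ioi] with t ht u hu
    exact hbound t ht.le u (hball hu)
  · exact Eventually.of_forall fun t u _ => hasDerivAt_rayMomentIntegrand n u t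

lemma tendsto_airyPrimitive_ray (u : ℝ) :
    Tendsto (fun t : ℝ => airyPrimitive κ u (δ + t * e)) atTop (𝓝 0) := by
  have hp (t : ℝ) (ht : 0 ≤ t) : ‖(2 : ℂ) * (δ + t * e)‖ ≤ 2 * δ + 2 * t := by
    have h := norm_add_ofReal_mul_le (norm_eq_one_of_pow_three_eq_neg_one he) (δ : ℂ) ht
    rw [norm_mul, Complex.norm_two]
    rw [Complex.norm_real, Real.norm_eq_abs, abs_of_pos hδ] at h
    linarith
  obtain ⟨K, A, B, C, hbound⟩ :=
    exists_norm_pow_mul_airyIntegrand_ray_le he hre (κ := κ) (M := |u|) hδ hp 1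
  rw [tendsto_zero_iff_norm_tendsto_zero]
  refine squeeze_zero' (Eventually.of_forall fun _ => norm_nonneg _) ?_
    (by simpa using (tendsto_cubicExp_atTop A B C).const_mul K)
  filter_upwards [eventually_ge_atTop 0] with t ht
  simpa [airyPrimitive] using hbound t ht u le_rfl

lemma rayMoment_ode (u : ℝ) :
    rayMoment κ δ e 3 u - κ * rayMoment κ δ e 2 u - u * rayMoment κ δ e 1 u
      + (κ * u - 1 / 2) * rayMoment κ δ e 0 u = airyPrimitive κ u δ / 2 := by
  have hint (n : ℕ) := integrableOn_rayMomentIntegrand he hre hδ (κ := κ) n u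
  have hint32 : IntegrableOn (fun t =>
      rayMomentIntegrand κ δ e 3 u t - κ * rayMomentIntegrand κ δ e 2 u t) (Ioi 0) :=
    (hint 3).sub ((hint 2).const_mul _)
  have hint321 : IntegrableOn (fun t => rayMomentIntegrand κ δ e 3 u t
      - κ * rayMomentIntegrand κ δ e 2 u t - u * rayMomentIntegrand κ δ e 1 u t) (Ioi 0) :=
    hint32.sub ((hint 1).const_mul _)
  let f : ℂ → ℂ := fun w =>
    -2 * ((κ - w) ^ 3 - κ * (κ - w) ^ 2 - u * (κ - w) + (κ * u - 1 / 2)) * airyIntegrand κ u w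
  have hf : (fun t : ℝ => f (δ + t * e) * e) = fun t => -2 *
      (rayMomentIntegrand κ δ e 3 u t - κ * rayMomentIntegrand κ δ e 2 u t
        - u * rayMomentIntegrand κ δ e 1 u t
        + (κ * u - 1 / 2) * rayMomentIntegrand κ δ e 0 u t) := by
    funext t
    simp only [f, rayMomentIntegrand]
    ring
  have hparts := integral_Ioi_ray_eq_neg (F := airyPrimitive κ u) (f := f)
    (fun t ht => hasDerivAt_airyPrimitive κ u (Or.inl (by rw [re_two_mul_ray hre]; linarith)))
    (by rw [hf]; exact (hint321.add ((hint 0).const_mul _)).const_mul _)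
    (tendsto_airyPrimitive_ray he hre hδ u)
  rw [hf, integral_const_mul, integral_add hint321 ((hint 0).const_mul _),
    integral_sub hint32 ((hint 1).const_mul _), integral_sub (hint 3) ((hint 2).const_mul _),
    integral_const_mul, integral_const_mul, integral_const_mul] at hparts
  unfold rayMoment
  linear_combination (-1 / 2 : ℂ) * hparts

end RayMoment

lemma exp_pi_div_three_mul_I_pow_three :
    Complex.exp ((Real.pi / 3 : ℝ) * Complex.I) ^ 3 = -1 := by
  rw [← Complex.exp_nat_mul]
  push_cast
  rw [show (3 : ℂ) * (Real.pi / 3 * Complex.I) = Real.pi * Complex.I by ring,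
    Complex.exp_pi_mul_I]

lemma exp_neg_pi_div_three_mul_I_pow_three :
    Complex.exp (-(Real.pi / 3 : ℝ) * Complex.I) ^ 3 = -1 := by
  rw [← Complex.exp_nat_mul]
  push_cast
  rw [show (3 : ℂ) * (-(Real.pi / 3) * Complex.I) = -(Real.pi * Complex.I) by ring,
    Complex.exp_neg, Complex.exp_pi_mul_I]
  norm_num

lemma re_exp_pi_div_three_mul_I : (Complex.exp ((Real.pi / 3 : ℝ) * Complex.I)).re = 1 / 2 := by
  rw [Complex.exp_ofReal_mul_I_re, Real.cos_pi_div_three]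

lemma re_exp_neg_pi_div_three_mul_I :
    (Complex.exp (-(Real.pi / 3 : ℝ) * Complex.I)).re = 1 / 2 := by
  rw [← Complex.ofReal_neg, Complex.exp_ofReal_mul_I_re, Real.cos_neg, Real.cos_pi_div_three]

lemma iteratedDeriv_phi1 {κ δ : ℝ} (hδ : 0 < δ) (k : ℕ) :
    iteratedDeriv k (phi1 κ δ) = fun u => (2 * (Real.pi : ℂ) * Complex.I)⁻¹ *
      (rayMoment κ δ (Complex.exp (-(Real.pi / 3 : ℝ) * Complex.I)) k u
        - rayMoment κ δ (Complex.exp ((Real.pi / 3 : ℝ) * Complex.I)) k u) := by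
  have hN := hasDerivAt_rayMoment exp_neg_pi_div_three_mul_I_pow_three
    re_exp_neg_pi_div_three_mul_I hδ (κ := κ)
  have hP := hasDerivAt_rayMoment exp_pi_div_three_mul_I_pow_three
    re_exp_pi_div_three_mul_I hδ (κ := κ)
  induction k with
  | zero =>
    funext u
    rw [iteratedDeriv_zero, phi1, rayMoment, rayMoment, ← integral_sub
      (integrableOn_rayMomentIntegrand exp_neg_pi_div_three_mul_I_pow_three
        re_exp_neg_pi_div_three_mul_I hδ 0 u)
      (integrableOn_rayMomentIntegrand exp_pi_div_three_mul_I_pow_three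
        re_exp_pi_div_three_mul_I hδ 0 u)]
    simp only [rayMomentIntegrand, pow_zero, one_mul]
  | succ k ih =>
    funext u
    rw [iteratedDeriv_succ, ih]
    exact (((hN k u).sub (hP k u)).const_mul _).deriv

/-- `φ₁` satisfies the third-order linear ODE
`φ₁''' - κ(φ₁'' - uφ₁) - uφ₁' - (1/2)φ₁ = 0`. -/
theorem stmt14 (κ δ : ℝ) (hδ : 0 < δ) (u : ℝ) :
    iteratedDeriv 3 (phi1 κ δ) u
      - κ * (iteratedDeriv 2 (phi1 κ δ) u - u * phi1 κ δ u)
      - u * deriv (phi1 κ δ) u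
      - (1/2) * phi1 κ δ u = 0 := by
  have hN := rayMoment_ode exp_neg_pi_div_three_mul_I_pow_three
    re_exp_neg_pi_div_three_mul_I hδ (κ := κ) u
  have hP := rayMoment_ode exp_pi_div_three_mul_I_pow_three
    re_exp_pi_div_three_mul_I hδ (κ := κ) u
  have h0 := iteratedDeriv_phi1 (κ := κ) hδ 0
  rw [iteratedDeriv_zero] at h0
  rw [← iteratedDeriv_one, iteratedDeriv_phi1 hδ 3, iteratedDeriv_phi1 hδ 2,
    iteratedDeriv_phi1 hδ 1, h0]
  linear_combination (2 * (Real.pi : ℂ) * Complex.I)⁻¹ * (hN - hP)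
end

section
/- Fix τ ∈ (0,1) and set η₋ = τ/(1-τ²), f(z) = 4η₋(z+1) + log(τz-1) - log(z-τ), z₀ = (1/2)(τ + 1/τ), and z₄ = 1 + i·((1-τ)/(2τ))·√((1+3τ)(1-τ)). Then Re f(z₄) - Re f(z₀) = -2(1-τ)/(1+τ) + (1/2)·log(1 + 4(1-τ)/(1+τ)), and this quantity is strictly negative for all τ ∈ (0,1). -/
/-- The real part of `f(z) = 4η₋(z+1) + log(τz-1) - log(z-τ)` with `η₋ = τ/(1-τ²)`. -/
noncomputable def Ref17 (τ : ℝ) (z : ℂ) : ℝ :=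
  4 * (τ/(1-τ^2)) * (z.re + 1) +
    Real.log (‖(τ*z - 1 : ℂ)‖) - Real.log (‖(z - τ : ℂ)‖)

/-!
Both `z₀` and `z₄` lie at distance `(1-τ²)/(2τ)` from `τ`, so the `log|z-τ|` terms cancel and
the difference is `4η₋(1 - z₀) + ½ log(|τz₄-1|²/|τz₀-1|²)`. Here `4η₋(1 - z₀) = -2(1-τ)/(1+τ)` and
`|τz₄-1|² / |τz₀-1|² = (5-3τ)/(1+τ) = 1 + 4(1-τ)/(1+τ)`. Negativity is `log(1+x) < x` at
`x = 4(1-τ)/(1+τ)`.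
-/

open Complex

noncomputable def z₀ (τ : ℝ) : ℂ := ((1/2)*(τ + 1/τ) : ℝ)

noncomputable def z₄ (τ : ℝ) : ℂ :=
  1 + Complex.I * (((1-τ)/(2*τ)) * Real.sqrt ((1+3*τ)*(1-τ)) : ℝ)

theorem Complex.log_norm_eq_half_log_normSq (z : ℂ) : Real.log ‖z‖ = Real.log (normSq z) / 2 := by
  rw [Complex.norm_def, Real.log_sqrt (normSq_nonneg z)]

theorem Ref17_sub_Ref17_of_normSq_sub_eq {τ : ℝ} {z w : ℂ}
    (h : normSq (z - τ) = normSq (w - τ)) :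
    Ref17 τ z - Ref17 τ w = 4 * (τ/(1-τ^2)) * (z.re - w.re)
      + (Real.log (normSq (τ*z - 1)) - Real.log (normSq (τ*w - 1))) / 2 := by
  simp only [Ref17, Complex.log_norm_eq_half_log_normSq, h]
  ring

section Points

variable {τ : ℝ}

theorem re_z₀ : (z₀ τ).re = (1/2)*(τ + 1/τ) := by
  simp [z₀]

theorem re_z₄ : (z₄ τ).re = 1 := by
  simp only [z₄, add_re, one_re, mul_re, I_re, I_im, ofReal_re, ofReal_im]
  ring

theorem normSq_mul_z₀_sub_one (hτ : τ ≠ 0) : normSq (τ * z₀ τ - 1) = ((1-τ^2)/2)^2 := by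
  rw [z₀, ← ofReal_one, ← ofReal_mul, ← ofReal_sub, normSq_ofReal]
  field_simp
  ring

theorem normSq_z₀_sub (hτ : τ ≠ 0) : normSq (z₀ τ - τ) = ((1-τ^2)/(2*τ))^2 := by
  rw [z₀, ← ofReal_sub, normSq_ofReal]
  field_simp
  ring

theorem normSq_one_add_I_mul_sub (τ b : ℝ) : normSq (1 + I * b - τ) = (1-τ)^2 + b^2 := by
  rw [show 1 + I * b - τ = ↑(1 - τ) + b * I by push_cast; ring, normSq_add_mul_I]

theorem normSq_mul_one_add_I_mul_sub_one (τ b : ℝ) :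
    normSq (τ * (1 + I * b) - 1) = (1-τ)^2 + τ^2 * b^2 := by
  rw [show τ * (1 + I * b) - 1 = ↑(τ - 1) + ↑(τ * b) * I by push_cast; ring, normSq_add_mul_I]
  ring

variable (hτ : τ ≠ 0) (hrad : 0 ≤ (1+3*τ)*(1-τ))
include hτ hrad

theorem normSq_mul_z₄_sub_one : normSq (τ * z₄ τ - 1) = (1-τ)^2 * ((5-3*τ)*(1+τ)) / 4 := by
  rw [z₄, normSq_mul_one_add_I_mul_sub_one, mul_pow, Real.sq_sqrt hrad]
  field_simp
  ring

theorem normSq_z₄_sub : normSq (z₄ τ - τ) = ((1-τ^2)/(2*τ))^2 := by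
  rw [z₄, normSq_one_add_I_mul_sub, mul_pow, Real.sq_sqrt hrad]
  field_simp
  ring

end Points

theorem neg_two_mul_div_add_half_log_one_add_four_mul_div_neg {a b : ℝ} (ha : 0 < a) (hb : 0 < b) :
    -2*a/b + (1/2) * Real.log (1 + 4*a/b) < 0 := by
  have hx : 0 < 4*a/b := by positivity
  have hlog := Real.log_lt_sub_one_of_pos (x := 1 + 4*a/b) (by linarith) (by linarith)
  have hhalf : -2*a/b = -((1/2) * (4*a/b)) := by ring
  linarith

/-- The estimate \eqref{nocri-airy-c3}:
`Re f(z₄) - Re f(z₀) = -2(1-τ)/(1+τ) + (1/2)log(1 + 4(1-τ)/(1+τ)) < 0`. -/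
theorem stmt17 (τ : ℝ) (hτ : τ ∈ Set.Ioo (0:ℝ) 1) :
    Ref17 τ (1 + Complex.I * (((1-τ)/(2*τ)) * Real.sqrt ((1+3*τ)*(1-τ)) : ℝ))
      - Ref17 τ (((1/2)*(τ + 1/τ) : ℝ))
      = -2*(1-τ)/(1+τ) + (1/2) * Real.log (1 + 4*(1-τ)/(1+τ))
    ∧ -2*(1-τ)/(1+τ) + (1/2) * Real.log (1 + 4*(1-τ)/(1+τ)) < 0 := by
  obtain ⟨h0, h1⟩ := hτ
  have hτ : τ ≠ 0 := h0.ne'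
  have hrad : 0 ≤ (1+3*τ)*(1-τ) := by nlinarith
  have hsub : 0 < 1 - τ := by linarith
  have h5 : 0 < 5 - 3*τ := by linarith
  have hsq : 0 < 1 - τ^2 := by nlinarith
  refine ⟨?_, neg_two_mul_div_add_half_log_one_add_four_mul_div_neg hsub (by positivity)⟩
  change Ref17 τ (z₄ τ) - Ref17 τ (z₀ τ) = _
  rw [Ref17_sub_Ref17_of_normSq_sub_eq (by rw [normSq_z₄_sub hτ hrad, normSq_z₀_sub hτ]),
    re_z₄, re_z₀, normSq_mul_z₄_sub_one hτ hrad, normSq_mul_z₀_sub_one hτ]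
  have hlin : 4 * (τ/(1-τ^2)) * (1 - (1/2)*(τ + 1/τ)) = -2*(1-τ)/(1+τ) := by
    rw [show (1:ℝ) - τ^2 = (1-τ)*(1+τ) by ring]
    field_simp
    ring
  have hratio : (1-τ)^2 * ((5-3*τ)*(1+τ)) / 4 / ((1-τ^2)/2)^2 = 1 + 4*(1-τ)/(1+τ) := by
    rw [show (1:ℝ) - τ^2 = (1-τ)*(1+τ) by ring]
    field_simp
    ring
  rw [← Real.log_div (by positivity) (by positivity), hratio, hlin]
  ring
end

section
/- Let τ ∈ (0,1), R > 3/2, and x > 4, and consider the phase f(x; z) = (τx/(1-τ²))(z+1) + log(τz-1) - log(z-τ). Along the circle z(φ) = 1/τ + (R/η₋)e^{iφ} with η₋ = τ/(1-τ²), the function φ ↦ Re f(x; z(φ)) is strictly decreasing for φ ∈ (0, π), provided x > 1/(R-1)². -/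
lemma gmono19 {R x t₁ t₂ : ℝ} (hR : 3/2 < R) (hx2 : 1/(R-1)^2 < x)
    (h1 : -1 ≤ t₁) (ht : t₁ < t₂) (h2 : t₂ ≤ 1) :
    x*R*t₁ - (1/2)*Real.log (1+R^2+2*R*t₁) < x*R*t₂ - (1/2)*Real.log (1+R^2+2*R*t₂) := by
  have hR0 : (0:ℝ) < R := by linarith
  have hRm : (0:ℝ) < (R-1)^2 := by nlinarith
  set u₁ := 1+R^2+2*R*t₁ with hu1
  set u₂ := 1+R^2+2*R*t₂ with hu2
  have hu1ge : (R-1)^2 ≤ u₁ := by rw [hu1]; nlinarith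
  have hu1p : (0:ℝ) < u₁ := lt_of_lt_of_le hRm hu1ge
  have hu2p : (0:ℝ) < u₂ := by rw [hu2]; nlinarith
  have hdiv : (0:ℝ) < u₂/u₁ := by positivity
  have hlog : Real.log u₂ - Real.log u₁ ≤ (u₂ - u₁)/u₁ := by
    have h := Real.log_le_sub_one_of_pos hdiv
    rw [Real.log_div hu2p.ne' hu1p.ne'] at h
    have : u₂/u₁ - 1 = (u₂-u₁)/u₁ := by field_simp
    linarith [this ▸ h]
  have hxu : 1/u₁ < x := by
    have h1u : 1/u₁ ≤ 1/(R-1)^2 := by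
      apply one_div_le_one_div_of_le hRm hu1ge
    linarith
  have hkey : (u₂ - u₁)/u₁ < 2*x*R*(t₂-t₁) := by
    have hdu : u₂ - u₁ = 2*R*(t₂-t₁) := by rw [hu1, hu2]; ring
    rw [hdu]
    rw [div_lt_iff₀ hu1p]
    have h1 : 1 < x*u₁ := by
      rw [one_div, inv_lt_iff_one_lt_mul₀ hu1p] at hxu
      · linarith [hxu]
    nlinarith [mul_pos (show (0:ℝ) < x*u₁ - 1 by linarith) (show (0:ℝ) < 2*R*(t₂-t₁) by nlinarith)]
  nlinarith [hlog, hkey]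

/-- The real part of the phase `f(x;z) = (τx/(1-τ²))(z+1) + log(τz-1) - log(z-τ)`
along the circle `z(φ) = 1/τ + (R/η₋)e^{iφ}`, `η₋ = τ/(1-τ²)`. -/
noncomputable def Ref19 (τ R x φ : ℝ) : ℝ :=
  (τ*x/(1-τ^2)) * ((1/(τ:ℂ) + (R/(τ/(1-τ^2)) : ℝ) * Complex.exp (Complex.I * φ)).re + 1) +
    Real.log ‖τ * (1/(τ:ℂ) + (R/(τ/(1-τ^2)) : ℝ) * Complex.exp (Complex.I * φ)) - 1‖ -
    Real.log ‖(1/(τ:ℂ) + (R/(τ/(1-τ^2)) : ℝ) * Complex.exp (Complex.I * φ)) - τ‖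

lemma key19 (τ R x : ℝ) (ht0 : 0 < τ) (ht1 : τ < 1) (hR : 3/2 < R) (φ : ℝ) :
    Ref19 τ R x φ = ((τ*x/(1-τ^2))*(1/τ+1) + Real.log (R*(1-τ^2)) - Real.log ((1-τ^2)/τ))
      + (x*R*Real.cos φ - (1/2)*Real.log (1+R^2+2*R*Real.cos φ)) := by
  have hR0 : (0:ℝ) < R := by linarith
  have h1t : (0:ℝ) < 1 - τ^2 := by nlinarith
  have haval : R/(τ/(1-τ^2)) = R*(1-τ^2)/τ := by field_simp
  have ha0 : 0 < R*(1-τ^2)/τ := by positivity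
  set a : ℝ := R*(1-τ^2)/τ with ha
  have hexp : Complex.exp (Complex.I * φ) = (Real.cos φ : ℂ) + (Real.sin φ : ℂ)*Complex.I := by
    rw [mul_comm, Complex.exp_mul_I, Complex.ofReal_cos, Complex.ofReal_sin]
  have hτC : (τ:ℂ) ≠ 0 := by exact_mod_cast ht0.ne'
  have hRC : (R:ℂ) ≠ 0 := by exact_mod_cast hR0.ne'
  set z : ℂ := 1/(τ:ℂ) + (a:ℝ) * Complex.exp (Complex.I * φ) with hzdef
  have hre : z.re = 1/τ + a*Real.cos φ := by
    have hz : z = ((1/τ + a*Real.cos φ : ℝ) : ℂ) + ((a*Real.sin φ : ℝ):ℂ)*Complex.I := by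
      rw [hzdef, hexp]; push_cast; ring
    rw [hz]
    simp only [Complex.add_re, Complex.mul_re, Complex.ofReal_re, Complex.ofReal_im,
      Complex.I_re, Complex.I_im]
    ring
  have h1 : (τ:ℂ)*z - 1 = ((τ*a : ℝ):ℂ) * Complex.exp (Complex.I*φ) := by
    rw [hzdef]; push_cast; field_simp; ring
  have habs1 : ‖(τ:ℂ)*z - 1‖ = τ*a := by
    rw [h1, norm_mul, Complex.norm_real, Real.norm_eq_abs, abs_of_pos (show (0:ℝ) < τ*a by positivity),
      Complex.norm_exp]
    simp
  have hzt : z - τ = ((a/R : ℝ):ℂ) * (1 + (R:ℂ)*Complex.exp (Complex.I*φ)) := by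
    rw [hzdef, ha]; push_cast; field_simp; ring
  have hw2 : (‖1 + (R:ℂ)*Complex.exp (Complex.I*φ)‖)^2 = 1+R^2+2*R*Real.cos φ := by
    rw [Complex.sq_norm, hexp, Complex.normSq_apply]
    simp only [Complex.add_re, Complex.add_im, Complex.mul_re, Complex.mul_im,
      Complex.ofReal_re, Complex.ofReal_im, Complex.I_re, Complex.I_im,
      Complex.one_re, Complex.one_im]
    nlinarith [Real.sin_sq_add_cos_sq φ]
  have hupos : (0:ℝ) < 1+R^2+2*R*Real.cos φ := by
    nlinarith [Real.neg_one_le_cos φ]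
  have hwpos : 0 < ‖1 + (R:ℂ)*Complex.exp (Complex.I*φ)‖ := by
    by_contra h
    push_neg at h
    have hn := norm_nonneg (1 + (R:ℂ)*Complex.exp (Complex.I*φ))
    have h0 : ‖1 + (R:ℂ)*Complex.exp (Complex.I*φ)‖ = 0 := le_antisymm h hn
    rw [h0] at hw2; nlinarith
  have haR : a/R = (1-τ^2)/τ := by rw [ha]; field_simp
  have habs2 : Real.log ‖z - τ‖ =
      Real.log ((1-τ^2)/τ) + (1/2)*Real.log (1+R^2+2*R*Real.cos φ) := by
    rw [hzt, norm_mul, Complex.norm_real, Real.norm_eq_abs, abs_of_pos (show (0:ℝ) < a/R by positivity),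
      Real.log_mul (by positivity) hwpos.ne']
    have hlg : Real.log ‖1 + (R:ℂ)*Complex.exp (Complex.I*φ)‖ =
        (1/2)*Real.log ((‖1 + (R:ℂ)*Complex.exp (Complex.I*φ)‖)^2) := by
      rw [Real.log_pow]; push_cast; ring
    rw [hlg, hw2, haR]
  have hconst : τ*a = R*(1-τ^2) := by rw [ha]; field_simp
  have hterm : τ*x/(1-τ^2) * (1/τ + a*Real.cos φ + 1) =
      (τ*x/(1-τ^2))*(1/τ+1) + x*R*Real.cos φ := by
    rw [ha]; field_simp; ring
  unfold Ref19
  rw [haval, ← hzdef, hre, habs1, habs2, hconst, hterm]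
  ring

/-- Along the circle `z(φ) = 1/τ + (R/η₋)e^{iφ}` with `R > 3/2`,
`φ ↦ Re f(x; z(φ))` is strictly decreasing on `(0, π)` provided `x > 1/(R-1)²`. -/
theorem stmt19 (τ R x : ℝ) (hτ : τ ∈ Set.Ioo (0:ℝ) 1) (hR : 3/2 < R)
    (hx : 4 < x) (hx2 : 1/(R-1)^2 < x) :
    StrictAntiOn (fun φ => Ref19 τ R x φ) (Set.Ioo 0 Real.pi) := by
  obtain ⟨ht0, ht1⟩ := hτ
  intro φ₁ h₁ φ₂ h₂ hlt
  simp only [key19 τ R x ht0 ht1 hR]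
  apply add_lt_add_right
  have hc : Real.cos φ₂ < Real.cos φ₁ :=
    Real.strictAntiOn_cos ⟨le_of_lt h₁.1, le_of_lt h₁.2⟩ ⟨le_of_lt h₂.1, le_of_lt h₂.2⟩ hlt
  exact gmono19 hR hx2 (Real.neg_one_le_cos φ₂) hc (Real.cos_le_one φ₁)
end
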